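/- There exists a constant C > 0 such that for all n ≥ 2 and all 1 ≤ k ≤ n, in the random permutation model on {1,…,n}: |Var(W_k(n)) − k²·log(k(n−k+1)) − n²/2| ≤ C·k·n, where log is the natural logarithm. -/

import Mathlib

open Finset Filter Topology MeasureTheory

/-- `eventA σ j k`: in the random binary search tree built by inserting the keys
`(σ 0 : ℕ) + 1, (σ 1 : ℕ) + 1, …` (so that the keys are `{1, …, n}` and `σ` is the
insertion order), the node labelled `k` lies in the subtree rooted at the node
labelled `j`; equivalently (for `j ≠ k`), `j` occurs before all other elements of
`{min j k, …, max j k}` in the insertion order.  For `j = k` this is the sure event. -/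
def eventA {n : ℕ} (σ : Equiv.Perm (Fin n)) (j k : ℕ) : Prop :=
  ∀ jf mf : Fin n, (jf : ℕ) + 1 = j →
    min j k ≤ (mf : ℕ) + 1 → (mf : ℕ) + 1 ≤ max j k → (mf : ℕ) + 1 ≠ j →
      σ.symm jf < σ.symm mf

/-- `eventB σ j k`: the event `B_{j,k}`, i.e. `A_{j,k-1}` for `j < k`,
`A_{j,k+1}` for `j > k`, and the sure event for `j = k`. -/
def eventB {n : ℕ} (σ : Equiv.Perm (Fin n)) (j k : ℕ) : Prop :=
  if j < k then eventA σ j (k - 1) else if k < j then eventA σ j (k + 1) else True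

open Classical in
/-- probability of an event under the uniform distribution on permutations. -/
noncomputable def probPerm {n : ℕ} (E : Equiv.Perm (Fin n) → Prop) : ℝ :=
  ((Finset.univ.filter fun σ => E σ).card : ℝ) / (Fintype.card (Equiv.Perm (Fin n)) : ℝ)

/-- expectation of a random variable under the uniform distribution on permutations. -/
noncomputable def expPerm {n : ℕ} (X : Equiv.Perm (Fin n) → ℝ) : ℝ :=
  (∑ σ : Equiv.Perm (Fin n), X σ) / (Fintype.card (Equiv.Perm (Fin n)) : ℝ)

/-- variance of a random variable under the uniform distribution on permutations. -/
noncomputable def varPerm {n : ℕ} (X : Equiv.Perm (Fin n) → ℝ) : ℝ :=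
  expPerm fun σ => (X σ - expPerm X) ^ 2

open Classical in
/-- real-valued indicator of a proposition. -/
noncomputable def ind (P : Prop) : ℝ := if P then 1 else 0

/-- `depthD σ k = D_k(n)`, the depth of the node labelled `k`. -/
noncomputable def depthD {n : ℕ} (σ : Equiv.Perm (Fin n)) (k : ℕ) : ℝ :=
  (∑ j : Fin n, ind (eventA σ ((j : ℕ) + 1) k)) - 1

/-- `weightW σ k = W_k(n)`, the weighted depth of the node labelled `k`. -/
noncomputable def weightW {n : ℕ} (σ : Equiv.Perm (Fin n)) (k : ℕ) : ℝ :=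
  ∑ j : Fin n, ((j : ℕ) + 1 : ℝ) * ind (eventA σ ((j : ℕ) + 1) k)

/-- `barW σ k = \bar W_k(n) = Σ_{j=1}^n j · 1_{B_{j,k}}`. -/
noncomputable def barW {n : ℕ} (σ : Equiv.Perm (Fin n)) (k : ℕ) : ℝ :=
  ∑ j : Fin n, ((j : ℕ) + 1 : ℝ) * ind (eventB σ ((j : ℕ) + 1) k)

/-- first-order harmonic number `H^{(1)}_m = Σ_{j=1}^m 1/j`. -/
noncomputable def H1 (m : ℕ) : ℝ := ∑ j ∈ Finset.range m, (1 : ℝ) / (j + 1)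

/-- second-order harmonic number `H^{(2)}_m = Σ_{j=1}^m 1/j²`. -/
noncomputable def H2 (m : ℕ) : ℝ := ∑ j ∈ Finset.range m, (1 : ℝ) / (j + 1) ^ 2

/-!
`A_{j,k}` says that key `j` is inserted first among the keys between `j` and `k`. A uniform
permutation is invariant under transpositions, so each key of a set is equally likely to come
first, even conditionally on an event insensitive to reorderings inside that set. Hence
`P(A_{j,k}) = 1/(|j-k|+1)`, the events `A_{u,k}` and `A_{v,k}` are independent when `u` and `v`
lie on the same side of `k` (their intervals are nested), and for `u = k - a < k < v = k + b` the
indicators have covariance `1/((a+1)(b+1)(a+b+1))`. Expanding `Var W_k` as a double sum of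
covariances leaves the diagonal sums `∑ (k-a)² a/(a+1)²` and `∑ (k+b)² b/(b+1)²`, which are
`k² log k + O(k²)` and `k² log(n-k+1) + n²/2 + O(kn)` because `∑_{d<M} d/(d+1)² = log M + O(1)`,
and the cross sum, which is at most `kn ∑_{a,b} 1/((a+1)(b+1)(a+b+1)) ≤ kn`.
-/

open Equiv

section IsFirst

variable {α : Type*} [LinearOrder α]

def IsFirst (σ : Perm α) (x : α) (S : Finset α) : Prop :=
  ∀ w ∈ S, w ≠ x → σ.symm x < σ.symm w

variable {σ : Perm α} {x y : α} {S T : Finset α}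

lemma IsFirst.eq (hx : x ∈ S) (hy : y ∈ S) (hfx : IsFirst σ x S) (hfy : IsFirst σ y S) :
    x = y := by
  by_contra h
  exact lt_asymm (hfx y hy (Ne.symm h)) (hfy x hx h)

lemma IsFirst.mono (h : IsFirst σ x T) (hST : S ⊆ T) : IsFirst σ x S :=
  fun w hw => h w (hST hw)

lemma exists_isFirst (σ : Perm α) (hS : S.Nonempty) : ∃ x ∈ S, IsFirst σ x S := by
  obtain ⟨x, hx, hmin⟩ := S.exists_min_image σ.symm hS
  exact ⟨x, hx, fun w hw hne => (hmin w hw).lt_of_ne (σ.symm.injective.ne hne.symm)⟩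

lemma swap_apply_mem_iff {a b w : α} (ha : a ∈ S) (hb : b ∈ S) : swap a b w ∈ S ↔ w ∈ S := by
  rcases eq_or_ne w a with rfl | hwa
  · simp [ha, hb]
  rcases eq_or_ne w b with rfl | hwb
  · simp [ha, hb]
  rw [swap_apply_of_ne_of_ne hwa hwb]

lemma isFirst_swap_mul_iff {a b : α} (ha : a ∈ S) (hb : b ∈ S) :
    IsFirst (swap a b * σ) x S ↔ IsFirst σ (swap a b x) S := by
  have hsymm : ∀ w, (swap a b * σ).symm w = σ.symm (swap a b w) := fun w => by
    simp [Perm.mul_def]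
  simp only [IsFirst, hsymm]
  constructor
  · intro h w hw hne
    simpa using h (swap a b w) ((swap_apply_mem_iff ha hb).2 hw)
      (fun he => hne (by rw [← he, swap_apply_self]))
  · intro h w hw hne
    exact h (swap a b w) ((swap_apply_mem_iff ha hb).2 hw) ((swap a b).injective.ne hne)

lemma isFirst_and_isFirst_iff (hx : x ∈ S) (hy : y ∈ T) :
    IsFirst σ x S ∧ IsFirst σ y T ↔
      IsFirst σ x (S ∪ T) ∧ IsFirst σ y T ∨ IsFirst σ y (S ∪ T) ∧ IsFirst σ x S := by
  constructor
  · rintro ⟨hfx, hfy⟩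
    obtain ⟨z, hz, hfz⟩ := exists_isFirst σ ⟨x, mem_union_left T hx⟩
    rcases mem_union.1 hz with hzS | hzT
    · obtain rfl := (hfz.mono subset_union_left).eq hzS hx hfx
      exact .inl ⟨hfz, hfy⟩
    · obtain rfl := (hfz.mono subset_union_right).eq hzT hy hfy
      exact .inr ⟨hfz, hfx⟩
  · rintro (⟨hfx, hfy⟩ | ⟨hfy, hfx⟩)
    · exact ⟨hfx.mono subset_union_left, hfy⟩
    · exact ⟨hfx, hfy.mono subset_union_right⟩

variable [Fintype α]

open scoped Classical in
lemma card_filter_eq_sum_card_filter_isFirst (Q : Perm α → Prop) (hS : S.Nonempty) :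
    #{σ | Q σ} = ∑ x ∈ S, #{σ | Q σ ∧ IsFirst σ x S} := by
  rw [← card_biUnion]
  · congr 1
    ext σ
    simp only [mem_filter, mem_univ, true_and, mem_biUnion]
    refine ⟨fun hQ => ?_, fun ⟨_, _, hQ, _⟩ => hQ⟩
    obtain ⟨x, hx, hfx⟩ := exists_isFirst σ hS
    exact ⟨x, hx, hQ, hfx⟩
  · intro x hx y hy hne
    refine disjoint_filter.2 fun σ _ hfx hfy => hne ?_
    exact hfx.2.eq hx hy hfy.2

open scoped Classical in
lemma card_filter_and_isFirst_eq (Q : Perm α → Prop)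
    (hQ : ∀ a ∈ S, ∀ b ∈ S, ∀ σ, Q σ → Q (swap a b * σ)) (hx : x ∈ S) (hy : y ∈ S) :
    #{σ | Q σ ∧ IsFirst σ x S} = #{σ | Q σ ∧ IsFirst σ y S} := by
  refine card_nbij' (swap x y * ·) (swap x y * ·) ?_ ?_ (fun σ _ => by simp [← mul_assoc])
    (fun σ _ => by simp [← mul_assoc])
  all_goals
    intro σ hσ
    simp only [coe_filter, mem_univ, true_and, Set.mem_ofPred_eq] at hσ ⊢
    exact ⟨hQ x hx y hy σ hσ.1, (isFirst_swap_mul_iff hx hy).2 (by simpa using hσ.2)⟩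

open scoped Classical in
lemma card_mul_card_filter_and_isFirst (Q : Perm α → Prop)
    (hQ : ∀ a ∈ S, ∀ b ∈ S, ∀ σ, Q σ → Q (swap a b * σ)) (hx : x ∈ S) :
    #S * #{σ | Q σ ∧ IsFirst σ x S} = #{σ | Q σ} := by
  rw [card_filter_eq_sum_card_filter_isFirst Q ⟨x, hx⟩,
    sum_congr rfl fun y hy => card_filter_and_isFirst_eq Q hQ hy hx, sum_const, smul_eq_mul]

end IsFirst

section ProbPerm

variable {n : ℕ} {x y : Fin n} {S T : Finset (Fin n)}

lemma probPerm_congr {E F : Perm (Fin n) → Prop} (h : ∀ σ, E σ ↔ F σ) :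
    probPerm E = probPerm F :=
  congrArg probPerm (funext fun σ => propext (h σ))

lemma probPerm_true : probPerm (fun _ : Perm (Fin n) => True) = 1 := by
  simp [probPerm]

open scoped Classical in
lemma probPerm_or_of_disjoint {E F : Perm (Fin n) → Prop} (h : ∀ σ, ¬(E σ ∧ F σ)) :
    probPerm (fun σ => E σ ∨ F σ) = probPerm E + probPerm F := by
  simp only [probPerm, ← add_div, filter_or, ← Nat.cast_add]
  rw [card_union_of_disjoint (disjoint_filter.2 fun σ _ hE hF => h σ ⟨hE, hF⟩)]

open scoped Classical in
lemma probPerm_and_isFirst (Q : Perm (Fin n) → Prop)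
    (hQ : ∀ a ∈ S, ∀ b ∈ S, ∀ σ, Q σ → Q (swap a b * σ)) (hx : x ∈ S) :
    probPerm (fun σ => Q σ ∧ IsFirst σ x S) = probPerm Q / #S := by
  have hcard : (#S : ℝ) * #{σ | Q σ ∧ IsFirst σ x S} = #{σ | Q σ} := by
    exact_mod_cast card_mul_card_filter_and_isFirst Q hQ hx
  have hS : (#S : ℝ) ≠ 0 := by exact_mod_cast (card_pos.2 ⟨x, hx⟩).ne'
  rw [probPerm, probPerm, ← hcard]
  field_simp
  convert rfl

lemma probPerm_isFirst (hx : x ∈ S) : probPerm (IsFirst · x S) = 1 / #S := by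
  rw [← probPerm_true, ← probPerm_and_isFirst _ (fun _ _ _ _ _ _ => trivial) hx]
  exact probPerm_congr fun σ => by rw [true_and]

/-- Whether `x` comes first in `S` is unaffected by reorderings inside `T`. -/
lemma probPerm_isFirst_and_isFirst_of_subset (hTS : T ⊆ S) (hx : x ∈ S) (hxT : x ∉ T)
    (hy : y ∈ T) :
    probPerm (fun σ => IsFirst σ x S ∧ IsFirst σ y T) = 1 / #S * (1 / #T) := by
  have hQ : ∀ a ∈ T, ∀ b ∈ T, ∀ σ, IsFirst σ x S → IsFirst (swap a b * σ) x S := by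
    intro a ha b hb σ h
    rw [isFirst_swap_mul_iff (hTS ha) (hTS hb),
      swap_apply_of_ne_of_ne (ne_of_mem_of_not_mem ha hxT).symm
        (ne_of_mem_of_not_mem hb hxT).symm]
    exact h
  rw [probPerm_and_isFirst _ hQ hy, probPerm_isFirst hx, div_eq_mul_one_div]

lemma probPerm_isFirst_and_isFirst_of_not_mem (hx : x ∈ S) (hxT : x ∉ T) (hy : y ∈ T)
    (hyS : y ∉ S) :
    probPerm (fun σ => IsFirst σ x S ∧ IsFirst σ y T)
      = 1 / #(S ∪ T) * (1 / #T) + 1 / #(S ∪ T) * (1 / #S) := by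
  have hxy : x ≠ y := ne_of_mem_of_not_mem hx hyS
  rw [probPerm_congr fun σ => isFirst_and_isFirst_iff hx hy, probPerm_or_of_disjoint]
  · rw [probPerm_isFirst_and_isFirst_of_subset subset_union_right (mem_union_left T hx) hxT hy,
      probPerm_isFirst_and_isFirst_of_subset subset_union_left (mem_union_right S hy) hyS hx]
  · rintro σ ⟨⟨hfx, -⟩, hfy, -⟩
    exact hxy (hfx.eq (mem_union_left T hx) (mem_union_right S hy) hfy)

end ProbPerm

section EventA

variable {n : ℕ}

/-- The keys `a, …, b` as elements of `Fin n`; key `j` is stored as `j - 1`. -/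
def keyInterval (n a b : ℕ) : Finset (Fin n) := {m | a ≤ (m : ℕ) + 1 ∧ (m : ℕ) + 1 ≤ b}

lemma mem_keyInterval {a b : ℕ} {m : Fin n} :
    m ∈ keyInterval n a b ↔ a ≤ (m : ℕ) + 1 ∧ (m : ℕ) + 1 ≤ b := by
  simp [keyInterval]

lemma card_keyInterval {a b : ℕ} (ha : 1 ≤ a) (hb : b ≤ n) :
    #(keyInterval n a b) = b + 1 - a := by
  have h : (keyInterval n a b).map Fin.valEmbedding = Ico (a - 1) b := by
    ext m
    simp only [Finset.mem_map, mem_keyInterval, Fin.valEmbedding_apply, mem_Ico]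
    constructor
    · rintro ⟨i, hi, rfl⟩
      omega
    · intro hm
      exact ⟨⟨m, by omega⟩, by simp only; omega, rfl⟩
  rw [← card_map, h, Nat.card_Ico]
  omega

lemma eventA_iff_isFirst {j k : ℕ} {x : Fin n} (hx : (x : ℕ) + 1 = j) (σ : Perm (Fin n)) :
    eventA σ j k ↔ IsFirst σ x (keyInterval n (min j k) (max j k)) := by
  constructor
  · intro h w hw hne
    exact h x w hx (mem_keyInterval.1 hw).1 (mem_keyInterval.1 hw).2
      fun hwj => hne (Fin.ext (by omega))
  · intro h jf mf hjf hmin hmax hmj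
    obtain rfl : jf = x := Fin.ext (by omega)
    exact h mf (mem_keyInterval.2 ⟨hmin, hmax⟩) fun hmx => hmj (by rw [hmx, hx])

lemma exists_fin_add_one_eq {j : ℕ} (h1 : 1 ≤ j) (hj : j ≤ n) : ∃ x : Fin n, (x : ℕ) + 1 = j :=
  ⟨⟨j - 1, by omega⟩, by simp only; omega⟩

lemma probPerm_eventA {j k : ℕ} (hj : 1 ≤ j) (hjn : j ≤ n) (hk : 1 ≤ k) (hkn : k ≤ n) :
    probPerm (fun σ : Perm (Fin n) => eventA σ j k) = 1 / ((max j k + 1 - min j k : ℕ) : ℝ) := by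
  obtain ⟨x, hx⟩ := exists_fin_add_one_eq hj hjn
  rw [probPerm_congr (eventA_iff_isFirst hx), probPerm_isFirst (mem_keyInterval.2 (by omega)),
    card_keyInterval (by omega) (by omega)]

noncomputable def covEventA (n k u v : ℕ) : ℝ :=
  probPerm (fun σ : Perm (Fin n) => eventA σ u k ∧ eventA σ v k)
    - probPerm (fun σ : Perm (Fin n) => eventA σ u k)
      * probPerm (fun σ : Perm (Fin n) => eventA σ v k)

lemma covEventA_comm (n k u v : ℕ) : covEventA n k u v = covEventA n k v u := by
  rw [covEventA, covEventA, probPerm_congr fun σ => and_comm, mul_comm]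

lemma covEventA_self_eq {k d u : ℕ} (hu : 1 ≤ u) (hun : u ≤ n) (hk : 1 ≤ k) (hkn : k ≤ n)
    (hd : max u k + 1 - min u k = d + 1) :
    covEventA n k u u = d / (d + 1) ^ 2 := by
  rw [covEventA, probPerm_congr fun σ => and_self_iff, probPerm_eventA hu hun hk hkn, hd]
  field_simp
  push_cast
  ring

lemma covEventA_eq_zero_of_nested {k u v : ℕ} (hu : 1 ≤ u) (hun : u ≤ n) (hk : 1 ≤ k) (hkn : k ≤ n)
    (huv : u < v ∧ v ≤ k ∨ k ≤ v ∧ v < u) : covEventA n k u v = 0 := by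
  obtain ⟨x, hx⟩ := exists_fin_add_one_eq hu hun
  obtain ⟨y, hy⟩ := exists_fin_add_one_eq (n := n) (j := v) (by omega) (by omega)
  rw [covEventA, probPerm_congr fun σ => and_congr (eventA_iff_isFirst hx σ)
      (eventA_iff_isFirst hy σ),
    probPerm_isFirst_and_isFirst_of_subset
      (fun m hm => mem_keyInterval.2 (by have := mem_keyInterval.1 hm; omega))
      (mem_keyInterval.2 (by omega)) (fun h => by have := mem_keyInterval.1 h; omega)
      (mem_keyInterval.2 (by omega)),
    probPerm_congr (eventA_iff_isFirst hx), probPerm_congr (eventA_iff_isFirst hy),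
    probPerm_isFirst (mem_keyInterval.2 (by omega)),
    probPerm_isFirst (mem_keyInterval.2 (by omega)), sub_self]

lemma covEventA_eq_zero_of_ne {k u v : ℕ} (hu : 1 ≤ u) (hun : u ≤ n) (hv : 1 ≤ v) (hvn : v ≤ n)
    (hk : 1 ≤ k) (hkn : k ≤ n) (huv : u ≠ v) (h₁ : ¬(u < k ∧ k < v)) (h₂ : ¬(v < k ∧ k < u)) :
    covEventA n k u v = 0 := by
  by_cases h : u < v ∧ v ≤ k ∨ k ≤ v ∧ v < u
  · exact covEventA_eq_zero_of_nested hu hun hk hkn h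
  · rw [covEventA_comm]
    exact covEventA_eq_zero_of_nested hv hvn hk hkn (by omega)

lemma covEventA_sub_add {k a b : ℕ} (ha : 1 ≤ a) (hak : a < k) (hb : 1 ≤ b) (hkb : k + b ≤ n) :
    covEventA n k (k - a) (k + b) = 1 / ((a + 1) * (b + 1) * (a + b + 1)) := by
  obtain ⟨x, hx⟩ := exists_fin_add_one_eq (n := n) (j := k - a) (by omega) (by omega)
  obtain ⟨y, hy⟩ := exists_fin_add_one_eq (n := n) (j := k + b) (by omega) hkb
  have hunion : keyInterval n (min (k - a) k) (max (k - a) k)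
      ∪ keyInterval n (min (k + b) k) (max (k + b) k) = keyInterval n (k - a) (k + b) := by
    ext m
    simp only [mem_union, mem_keyInterval]
    omega
  rw [covEventA, probPerm_congr fun σ => and_congr (eventA_iff_isFirst hx σ)
      (eventA_iff_isFirst hy σ),
    probPerm_isFirst_and_isFirst_of_not_mem (mem_keyInterval.2 (by omega))
      (fun h => by have := mem_keyInterval.1 h; omega) (mem_keyInterval.2 (by omega))
      (fun h => by have := mem_keyInterval.1 h; omega),
    hunion, probPerm_eventA (by omega) (by omega) (by omega) (by omega),
    probPerm_eventA (by omega) hkb (by omega) (by omega),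
    card_keyInterval (by omega) hkb, card_keyInterval (by omega) (by omega),
    card_keyInterval (by omega) (by omega)]
  rw [show max (k - a) k + 1 - min (k - a) k = a + 1 by omega,
    show max (k + b) k + 1 - min (k + b) k = b + 1 by omega,
    show k + b + 1 - (k - a) = a + b + 1 by omega]
  field_simp
  push_cast
  ring

end EventA

section Variance

variable {n : ℕ}

lemma ind_and (P Q : Prop) : ind (P ∧ Q) = ind P * ind Q := by
  by_cases hP : P <;> by_cases hQ : Q <;> simp [ind, hP, hQ]

lemma varPerm_eq_expPerm_sq_sub (X : Perm (Fin n) → ℝ) :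
    varPerm X = expPerm (fun σ => X σ ^ 2) - expPerm X ^ 2 := by
  have hN : (Fintype.card (Perm (Fin n)) : ℝ) ≠ 0 := by positivity
  simp only [varPerm, expPerm, sub_sq, sum_add_distrib, sum_sub_distrib, ← sum_mul, ← mul_sum,
    sum_const, card_univ, nsmul_eq_mul]
  field_simp
  ring

lemma expPerm_sum_mul_ind {ι : Type*} (s : Finset ι) (c : ι → ℝ) (E : ι → Perm (Fin n) → Prop) :
    expPerm (fun σ => ∑ i ∈ s, c i * ind (E i σ)) = ∑ i ∈ s, c i * probPerm (E i) := by
  classical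
  simp only [expPerm, probPerm, ind, sum_comm (s := univ), sum_div, mul_div_assoc, ← mul_sum,
    sum_boole]

lemma varPerm_sum_mul_ind {ι : Type*} (s : Finset ι) (c : ι → ℝ) (E : ι → Perm (Fin n) → Prop) :
    varPerm (fun σ => ∑ i ∈ s, c i * ind (E i σ))
      = ∑ i ∈ s, ∑ j ∈ s, c i * c j *
          (probPerm (fun σ => E i σ ∧ E j σ) - probPerm (E i) * probPerm (E j)) := by
  have hsq : ∀ σ, (∑ i ∈ s, c i * ind (E i σ)) ^ 2
      = ∑ p ∈ s ×ˢ s, c p.1 * c p.2 * ind (E p.1 σ ∧ E p.2 σ) := fun σ => by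
    rw [sq, sum_mul_sum, sum_product]
    exact sum_congr rfl fun i _ => sum_congr rfl fun j _ => by rw [ind_and]; ring
  rw [varPerm_eq_expPerm_sq_sub, funext hsq, expPerm_sum_mul_ind, expPerm_sum_mul_ind, sq,
    sum_mul_sum, ← sum_product' (f := fun i j => c i * probPerm (E i) * (c j * probPerm (E j))),
    ← sum_sub_distrib, sum_product]
  exact sum_congr rfl fun i _ => sum_congr rfl fun j _ => by ring

end Variance

section Decomposition

lemma sum_sum_eq_sum_diag_add_two_mul_sum_cross {ι R : Type*} [LinearOrder ι] [Semiring R]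
    (s : Finset ι) (k : ι) (f : ι → ι → R) (hf : ∀ u v, f u v = f v u)
    (hzero : ∀ u ∈ s, ∀ v ∈ s, u ≠ v → ¬(u < k ∧ k < v) → ¬(v < k ∧ k < u) → f u v = 0) :
    ∑ u ∈ s, ∑ v ∈ s, f u v
      = ∑ u ∈ s, f u u + 2 * ∑ u ∈ s with u < k, ∑ v ∈ s with k < v, f u v := by
  have hsplit : ∀ u ∈ s, ∀ v ∈ s, f u v = (if u = v then f u v else 0)
      + ((if u < k ∧ k < v then f u v else 0) + (if v < k ∧ k < u then f v u else 0)) := by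
    intro u hu v hv
    by_cases huv : u = v
    · subst huv
      have hsep : ¬(u < k ∧ k < u) := fun h => lt_asymm h.1 h.2
      simp [hsep]
    split_ifs with h₁ h₂ h₂
    · exact absurd h₂.2 (lt_asymm h₁.1)
    · simp
    · simp [hf u v]
    · simp [hzero u hu v hv huv h₁ h₂]
  have hcross : ∑ u ∈ s, ∑ v ∈ s, (if u < k ∧ k < v then f u v else 0)
      = ∑ u ∈ s with u < k, ∑ v ∈ s with k < v, f u v := by
    rw [sum_filter]
    refine sum_congr rfl fun u _ => ?_
    split_ifs with hu <;> simp [sum_filter, hu]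
  rw [sum_congr rfl fun u hu => sum_congr rfl (hsplit u hu)]
  simp only [sum_add_distrib, sum_ite_eq]
  rw [sum_comm (f := fun u v => if v < k ∧ k < u then f v u else 0), hcross, two_mul]
  exact congrArg (· + _) (sum_congr rfl fun u hu => if_pos hu)

end Decomposition

section Reindexing

variable {M : Type*} [AddCommMonoid M]

lemma sum_Ico_one_reflect (f : ℕ → M) (k : ℕ) :
    ∑ u ∈ Ico 1 k, f u = ∑ a ∈ Ico 1 k, f (k - a) := by
  rw [sum_Ico_reflect f 1 (Nat.le_succ k), Nat.add_sub_cancel_left, Nat.add_sub_cancel]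

lemma sum_Ico_succ_shift (f : ℕ → M) {k n : ℕ} (hkn : k ≤ n) :
    ∑ v ∈ Ico (k + 1) (n + 1), f v = ∑ b ∈ Ico 1 (n - k + 1), f (k + b) := by
  simp_rw [add_comm k, sum_Ico_add' f 1 (n - k + 1) k]
  congr 2
  omega

lemma sum_Ico_one_eq_reflect_add_shift (f : ℕ → M) {k n : ℕ} (hk : 1 ≤ k) (hkn : k ≤ n) :
    ∑ u ∈ Ico 1 (n + 1), f u
      = ∑ a ∈ Ico 1 k, f (k - a) + f k + ∑ b ∈ Ico 1 (n - k + 1), f (k + b) := by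
  rw [← sum_Ico_consecutive f hk (by omega : k ≤ n + 1),
    sum_eq_sum_Ico_succ_bot (by omega : k < n + 1), sum_Ico_one_reflect, sum_Ico_succ_shift f hkn,
    add_assoc]

end Reindexing

section WeightedDepth

variable {n : ℕ}

lemma weightW_eq_sum_Ico (σ : Perm (Fin n)) (k : ℕ) :
    weightW σ k = ∑ j ∈ Ico 1 (n + 1), (j : ℝ) * ind (eventA σ j k) := by
  rw [weightW, Fin.sum_univ_eq_sum_range (fun i => ((i : ℝ) + 1) * ind (eventA σ (i + 1) k)),
    range_eq_Ico, ← sum_Ico_add' _ 0 n 1]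
  push_cast
  rfl

lemma varPerm_weightW_eq_sum_covEventA {k : ℕ} (hk : 1 ≤ k) (hkn : k ≤ n) :
    varPerm (fun σ : Perm (Fin n) => weightW σ k)
      = ∑ u ∈ Ico 1 (n + 1), (u : ℝ) * u * covEventA n k u u
        + 2 * ∑ u ∈ Ico 1 k, ∑ v ∈ Ico (k + 1) (n + 1), (u : ℝ) * v * covEventA n k u v := by
  have hleft : (Ico 1 (n + 1)).filter (· < k) = Ico 1 k := by
    ext u
    simp only [mem_filter, mem_Ico]
    omega
  have hright : (Ico 1 (n + 1)).filter (k < ·) = Ico (k + 1) (n + 1) := by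
    ext u
    simp only [mem_filter, mem_Ico]
    omega
  have hexpand : varPerm (fun σ : Perm (Fin n) => weightW σ k)
      = ∑ u ∈ Ico 1 (n + 1), ∑ v ∈ Ico 1 (n + 1), (u : ℝ) * v * covEventA n k u v := by
    simp only [weightW_eq_sum_Ico, varPerm_sum_mul_ind]
    rfl
  rw [hexpand, sum_sum_eq_sum_diag_add_two_mul_sum_cross _ k _
    (fun u v => by rw [covEventA_comm, mul_comm (u : ℝ)]), hleft, hright]
  intro u hu v hv huv h₁ h₂
  rw [mem_Ico] at hu hv
  rw [covEventA_eq_zero_of_ne (by omega) (by omega) (by omega) (by omega) hk hkn huv h₁ h₂,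
    mul_zero]

lemma sum_mul_self_covEventA_self {k : ℕ} (hk : 1 ≤ k) (hkn : k ≤ n) :
    ∑ u ∈ Ico 1 (n + 1), (u : ℝ) * u * covEventA n k u u
      = ∑ a ∈ Ico 1 k, ((k : ℝ) - a) ^ 2 * (a / (a + 1) ^ 2)
        + ∑ b ∈ Ico 1 (n - k + 1), ((k : ℝ) + b) ^ 2 * (b / (b + 1) ^ 2) := by
  have hkk : covEventA n k k k = 0 := by
    rw [covEventA_self_eq (d := 0) hk hkn hk hkn (by simp)]
    simp
  rw [sum_Ico_one_eq_reflect_add_shift _ hk hkn, hkk, mul_zero, add_zero]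
  congr 1
  · refine sum_congr rfl fun a ha => ?_
    rw [mem_Ico] at ha
    rw [covEventA_self_eq (d := a) (by omega) (by omega) hk hkn (by omega),
      Nat.cast_sub ha.2.le]
    ring
  · refine sum_congr rfl fun b hb => ?_
    rw [mem_Ico] at hb
    rw [covEventA_self_eq (d := b) (by omega) (by omega) hk hkn (by omega)]
    push_cast
    ring

lemma sum_sum_mul_covEventA_cross {k : ℕ} (hkn : k ≤ n) :
    ∑ u ∈ Ico 1 k, ∑ v ∈ Ico (k + 1) (n + 1), (u : ℝ) * v * covEventA n k u v
      = ∑ a ∈ Ico 1 k, ∑ b ∈ Ico 1 (n - k + 1),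
          ((k : ℝ) - a) * (k + b) / ((a + 1) * (b + 1) * (a + b + 1)) := by
  rw [sum_Ico_one_reflect]
  refine sum_congr rfl fun a ha => ?_
  rw [sum_Ico_succ_shift _ hkn]
  refine sum_congr rfl fun b hb => ?_
  rw [mem_Ico] at ha hb
  rw [covEventA_sub_add ha.1 ha.2 hb.1 (by omega), Nat.cast_sub ha.2.le]
  push_cast
  ring

lemma varPerm_weightW_eq {k : ℕ} (hk : 1 ≤ k) (hkn : k ≤ n) :
    varPerm (fun σ : Perm (Fin n) => weightW σ k)
      = ∑ a ∈ Ico 1 k, ((k : ℝ) - a) ^ 2 * (a / (a + 1) ^ 2)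
        + ∑ b ∈ Ico 1 (n - k + 1), ((k : ℝ) + b) ^ 2 * (b / (b + 1) ^ 2)
        + 2 * ∑ a ∈ Ico 1 k, ∑ b ∈ Ico 1 (n - k + 1),
            ((k : ℝ) - a) * (k + b) / ((a + 1) * (b + 1) * (a + b + 1)) := by
  rw [varPerm_weightW_eq_sum_covEventA hk hkn, sum_mul_self_covEventA_self hk hkn,
    sum_sum_mul_covEventA_cross hkn]

end WeightedDepth

section Estimates

lemma abs_sum_sub_sum_le {ι : Type*} (s : Finset ι) (f g : ι → ℝ) {c : ℝ}
    (h : ∀ i ∈ s, |f i - g i| ≤ c) : |∑ i ∈ s, f i - ∑ i ∈ s, g i| ≤ #s * c := by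
  rw [← sum_sub_distrib, ← nsmul_eq_mul]
  exact (abs_sum_le_sum_abs _ _).trans (sum_le_card_nsmul _ _ _ h)

lemma sum_Ico_one_cast_id (m : ℕ) : ∑ b ∈ Ico 1 (m + 1), (b : ℝ) = m * (m + 1) / 2 := by
  induction m with
  | zero => simp
  | succ m ih =>
    rw [sum_Ico_succ_top (by omega), ih]
    push_cast
    ring

lemma sum_Ico_one_div_mul_add_one_le {x : ℝ} (hx : 0 ≤ x) (L : ℕ) :
    ∑ b ∈ Ico 1 L, 1 / ((x + b) * (x + b + 1)) ≤ 1 / (x + 1) := by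
  have htel : ∀ i : ℕ, 1 / ((x + (1 + i : ℕ)) * (x + (1 + i : ℕ) + 1))
      = 1 / (x + 1 + i) - 1 / (x + 1 + (i + 1 : ℕ)) := fun i => by
    push_cast
    field_simp
    ring
  rw [sum_Ico_eq_sum_range, sum_congr rfl fun i _ => htel i,
    sum_range_sub' (fun i : ℕ => 1 / (x + 1 + i))]
  simp only [CharP.cast_eq_zero, add_zero, sub_le_self_iff]
  positivity

lemma sum_sum_one_div_le_one (K L : ℕ) :
    ∑ a ∈ Ico 1 K, ∑ b ∈ Ico 1 L, 1 / (((a : ℝ) + 1) * (b + 1) * (a + b + 1)) ≤ 1 := by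
  have hhalf : ∀ K L : ℕ, ∑ a ∈ Ico 1 K, ∑ b ∈ Ico 1 L,
      1 / ((a : ℝ) + 1) * (1 / ((a + 1 + b) * (a + 1 + b + 1))) ≤ 1 / 2 := by
    intro K L
    calc _ ≤ ∑ a ∈ Ico 1 K, 1 / ((a : ℝ) + 1) * (1 / (a + 1 + 1)) := by
          refine sum_le_sum fun a _ => ?_
          rw [← mul_sum]
          exact mul_le_mul_of_nonneg_left (sum_Ico_one_div_mul_add_one_le (by positivity) L)
            (by positivity)
      _ = ∑ a ∈ Ico 1 K, 1 / ((1 + (a : ℝ)) * (1 + a + 1)) := sum_congr rfl fun a _ => by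
          rw [one_div_mul_one_div, add_comm (a : ℝ) 1]
      _ ≤ 1 / 2 := le_of_le_of_eq (sum_Ico_one_div_mul_add_one_le zero_le_one K) (by norm_num)
  -- `1/((a+1)(b+1)) = (1/(a+1) + 1/(b+1)) / (a+b+2)`; each half telescopes in the other variable
  have hsplit : ∀ a b : ℕ, 1 / (((a : ℝ) + 1) * (b + 1) * (a + b + 1))
      = 1 / ((a : ℝ) + 1) * (1 / ((a + 1 + b) * (a + 1 + b + 1)))
        + 1 / ((b : ℝ) + 1) * (1 / ((b + 1 + a) * (b + 1 + a + 1))) := fun a b => by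
    field_simp
    ring
  simp only [hsplit, sum_add_distrib]
  rw [sum_comm (s := Ico 1 K) (t := Ico 1 L)
    (f := fun a b => 1 / ((b : ℝ) + 1) * (1 / ((b + 1 + a) * (b + 1 + a + 1))))]
  linarith [hhalf K L, hhalf L K]

lemma abs_sum_Ico_div_sq_sub_log_le {M : ℕ} (hM : 1 ≤ M) :
    |∑ d ∈ Ico 1 M, (d : ℝ) / (d + 1) ^ 2 - Real.log M| ≤ 2 := by
  have hharmonic : ∑ d ∈ Ico 1 M, 1 / ((d : ℝ) + 1) = harmonic M - 1 := by
    rw [harmonic, range_eq_Ico, sum_eq_sum_Ico_succ_bot (by omega : 0 < M)]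
    push_cast
    simp [one_div]
  have hsq : ∑ d ∈ Ico 1 M, 1 / ((d : ℝ) + 1) ^ 2 ≤ 1 := by
    refine (sum_le_sum fun d hd => ?_).trans
      ((sum_Ico_one_div_mul_add_one_le le_rfl M).trans_eq (by norm_num))
    have hd : (1 : ℝ) ≤ d := by exact_mod_cast (mem_Ico.1 hd).1
    exact one_div_le_one_div_of_le (by positivity) (by nlinarith)
  have hsplit : ∑ d ∈ Ico 1 M, (d : ℝ) / (d + 1) ^ 2
      = ∑ d ∈ Ico 1 M, 1 / ((d : ℝ) + 1) - ∑ d ∈ Ico 1 M, 1 / ((d : ℝ) + 1) ^ 2 := by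
    rw [← sum_sub_distrib]
    exact sum_congr rfl fun d _ => by field_simp; ring
  have hsq_nonneg : 0 ≤ ∑ d ∈ Ico 1 M, 1 / ((d : ℝ) + 1) ^ 2 := by positivity
  have hlog : Real.log M ≤ Real.log (M + 1 : ℕ) :=
    Real.log_le_log (by exact_mod_cast hM) (by push_cast; linarith)
  have hlow := log_add_one_le_harmonic M
  have hup := harmonic_le_one_add_log M
  rw [hsplit, hharmonic, abs_le]
  constructor <;> linarith

lemma abs_sum_left_sub_log_le {k : ℕ} (hk : 1 ≤ k) :
    |∑ a ∈ Ico 1 k, ((k : ℝ) - a) ^ 2 * (a / (a + 1) ^ 2) - k ^ 2 * Real.log k|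
      ≤ 4 * (k : ℝ) ^ 2 := by
  have hterm : ∀ a ∈ Ico 1 k,
      |((k : ℝ) - a) ^ 2 * (a / (a + 1) ^ 2) - k ^ 2 * (a / (a + 1) ^ 2)| ≤ 2 * (k : ℝ) := by
    intro a ha
    have ha0 : (0 : ℝ) ≤ a := by positivity
    have hak : (a : ℝ) ≤ k := by exact_mod_cast (mem_Ico.1 ha).2.le
    have hpos : (0 : ℝ) < (a + 1) ^ 2 := by positivity
    rw [← sub_mul, mul_div_assoc', abs_div, abs_of_pos hpos, div_le_iff₀ hpos, abs_le]
    constructor <;>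
      nlinarith [mul_nonneg ha0 ha0, mul_nonneg (mul_nonneg ha0 ha0) (sub_nonneg.2 hak)]
  have hsum := abs_sum_sub_sum_le _ _ _ hterm
  rw [← mul_sum, Nat.card_Ico] at hsum
  have hlog : |(k : ℝ) ^ 2 * ∑ a ∈ Ico 1 k, (a : ℝ) / (a + 1) ^ 2 - k ^ 2 * Real.log k|
      ≤ 2 * (k : ℝ) ^ 2 := by
    rw [← mul_sub, abs_mul, abs_of_nonneg (by positivity), mul_comm]
    exact mul_le_mul_of_nonneg_right (abs_sum_Ico_div_sq_sub_log_le hk) (by positivity)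
  have hcard : ((k - 1 : ℕ) : ℝ) ≤ k := by exact_mod_cast Nat.sub_le k 1
  have hk0 : (0 : ℝ) ≤ k := by positivity
  rw [abs_le] at hsum hlog ⊢
  constructor <;> nlinarith [mul_le_mul_of_nonneg_left hcard hk0]

lemma abs_sum_right_sub_log_le {k : ℕ} (hk : 1 ≤ k) (m : ℕ) :
    |∑ b ∈ Ico 1 (m + 1), ((k : ℝ) + b) ^ 2 * (b / (b + 1) ^ 2) - k ^ 2 * Real.log (m + 1)
      - (k + m) ^ 2 / 2| ≤ 8 * (k : ℝ) * (k + m) := by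
  have hk1 : (1 : ℝ) ≤ k := by exact_mod_cast hk
  have hterm : ∀ b ∈ Ico 1 (m + 1),
      |((k : ℝ) + b) ^ 2 * (b / (b + 1) ^ 2) - (k ^ 2 * (b / (b + 1) ^ 2) + b)| ≤ 4 * (k : ℝ) := by
    intro b _
    have hb0 : (0 : ℝ) ≤ b := by positivity
    have hpos : (0 : ℝ) < (b + 1) ^ 2 := by positivity
    have h : ((k : ℝ) + b) ^ 2 * (b / (b + 1) ^ 2) - (k ^ 2 * (b / (b + 1) ^ 2) + b)
        = (2 * k * b ^ 2 - 2 * b ^ 2 - b) / (b + 1) ^ 2 := by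
      field_simp
      ring
    rw [h, abs_div, abs_of_pos hpos, div_le_iff₀ hpos, abs_le]
    constructor <;> nlinarith [mul_nonneg hb0 hb0]
  have hsum := abs_sum_sub_sum_le _ _ _ hterm
  rw [sum_add_distrib, ← mul_sum, sum_Ico_one_cast_id, Nat.card_Ico, Nat.add_sub_cancel] at hsum
  have hlog : |(k : ℝ) ^ 2 * ∑ b ∈ Ico 1 (m + 1), (b : ℝ) / (b + 1) ^ 2
      - k ^ 2 * Real.log (m + 1)| ≤ 2 * (k : ℝ) ^ 2 := by
    rw [← mul_sub, abs_mul, abs_of_nonneg (by positivity), mul_comm]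
    refine mul_le_mul_of_nonneg_right ?_ (by positivity)
    exact_mod_cast abs_sum_Ico_div_sq_sub_log_le (M := m + 1) (by omega)
  have hm0 : (0 : ℝ) ≤ m := by positivity
  rw [abs_le] at hsum hlog ⊢
  constructor <;> nlinarith [mul_le_mul_of_nonneg_right hk1 hm0]

lemma abs_sum_cross_le (k m : ℕ) :
    |∑ a ∈ Ico 1 k, ∑ b ∈ Ico 1 (m + 1),
        ((k : ℝ) - a) * (k + b) / ((a + 1) * (b + 1) * (a + b + 1))| ≤ k * (k + m) := by
  have hterm : ∀ a ∈ Ico 1 k, ∀ b ∈ Ico 1 (m + 1),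
      0 ≤ ((k : ℝ) - a) * (k + b) / ((a + 1) * (b + 1) * (a + b + 1)) ∧
      ((k : ℝ) - a) * (k + b) / ((a + 1) * (b + 1) * (a + b + 1))
        ≤ k * (k + m) * (1 / ((a + 1) * (b + 1) * (a + b + 1))) := by
    intro a ha b hb
    have hak : (a : ℝ) ≤ k := by exact_mod_cast (mem_Ico.1 ha).2.le
    have hbm : (b : ℝ) ≤ m := by exact_mod_cast Nat.lt_succ_iff.1 (mem_Ico.1 hb).2
    rw [mul_one_div]
    refine ⟨div_nonneg (mul_nonneg (by linarith) (by positivity)) (by positivity),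
      div_le_div_of_nonneg_right (mul_le_mul (by linarith) (by linarith) (by positivity)
        (by positivity)) (by positivity)⟩
  rw [abs_of_nonneg (sum_nonneg fun a ha => sum_nonneg fun b hb => (hterm a ha b hb).1)]
  calc _ ≤ ∑ a ∈ Ico 1 k, ∑ b ∈ Ico 1 (m + 1),
        (k : ℝ) * (k + m) * (1 / ((a + 1) * (b + 1) * (a + b + 1))) :=
        sum_le_sum fun a ha => sum_le_sum fun b hb => (hterm a ha b hb).2
    _ ≤ k * (k + m) := by
        simp only [← mul_sum]
        exact mul_le_of_le_one_right (by positivity) (sum_sum_one_div_le_one _ _)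

end Estimates

/-- There exists `C > 0` such that for all `n ≥ 2` and all `1 ≤ k ≤ n`,
`|Var(W_k(n)) − k²·log(k(n−k+1)) − n²/2| ≤ C·k·n`. -/
theorem variance_weightW_expansion :
    ∃ C : ℝ, 0 < C ∧ ∀ n : ℕ, 2 ≤ n → ∀ k : ℕ, 1 ≤ k → k ≤ n →
      |varPerm (fun σ : Equiv.Perm (Fin n) => weightW σ k)
          - (k : ℝ) ^ 2 * Real.log ((k : ℝ) * ((n : ℝ) - (k : ℝ) + 1)) - (n : ℝ) ^ 2 / 2|
        ≤ C * (k : ℝ) * (n : ℝ) := by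
  refine ⟨14, by norm_num, fun n _ k hk hkn => ?_⟩
  obtain ⟨m, rfl⟩ := Nat.exists_eq_add_of_le hkn
  have hlog : Real.log ((k : ℝ) * (((k + m : ℕ) : ℝ) - k + 1))
      = Real.log k + Real.log ((m : ℝ) + 1) := by
    rw [← Real.log_mul (by positivity) (by positivity)]
    push_cast
    ring_nf
  rw [varPerm_weightW_eq hk hkn, Nat.add_sub_cancel_left, hlog]
  have hleft := abs_sum_left_sub_log_le hk
  have hright := abs_sum_right_sub_log_le hk m
  have hcross := abs_sum_cross_le k m
  have hk0 : (0 : ℝ) ≤ k := by positivity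
  have hm0 : (0 : ℝ) ≤ m := by positivity
  push_cast
  rw [abs_le] at hleft hright hcross ⊢
  constructor <;> nlinarith [mul_nonneg hk0 hm0]
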